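/- Let C ⊆ [0,1] be a compact nowhere dense set and for ε > 0 let H_ε(C) = {φ ∈ H⁺ : there are no x ∈ ℝ and d ≥ ε with x, x+d, x+2d ∈ φ(C)}. Then the set H_0(C) = ⋂_{k≥1} H_{1/k}(C) is residual in H⁺, and for every φ ∈ H_0(C) the image φ(C) is FAP. -/

import Mathlib

/-
`H_ε(C)` is open: its complement is the projection of a closed subset of `H⁺ × [0,1]³`
(triples of `C` whose images form a progression of step `≥ ε`), and `[0,1]³` is compact.

`H_ε(C)` is dense: `D = φ(C)` is closed with empty interior, so `[0,1]` can be cut at points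
`s_j ∉ D` of small mesh. A piecewise linear homeomorphism `g` fixing the cuts moves points by less
than the mesh and squeezes the part of `D` in each window into a tiny interval around one point of
a finite AP-free set `P` (chosen greedily, with `0` and `1` for the two end windows). Then a
progression of step `≥ ε` in `g(D)` would be a progression of `P` up to an error below the margin
by which `P` is AP-free.

Hence `H_0(C)` is a countable intersection of dense open sets, and a progression of step `d > 0`
in `φ(C)` is excluded by `H_{1/k}(C)` as soon as `1/k ≤ d`.
-/

open Set

noncomputable section

/-- `A ⊆ ℝ` is *FAP* (free of arithmetic progressions): it contains no 3-term AP. -/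
def FAP (A : Set ℝ) : Prop :=
  ¬ ∃ x d : ℝ, 0 < d ∧ x ∈ A ∧ x + d ∈ A ∧ x + 2 * d ∈ A

/-- `H⁺`: the strictly increasing homeomorphisms of `[0,1]` onto itself, realized as the
subset of `C([0,1], ℝ)` (carrying the sup-norm topology) consisting of the strictly
increasing continuous functions fixing `0` and `1` (such a map is automatically a
homeomorphism of `[0,1]` onto itself). -/
def Hplus : Set C(Set.Icc (0:ℝ) 1, ℝ) :=
  {f | StrictMono f ∧ f ⟨0, by norm_num⟩ = 0 ∧ f ⟨1, by norm_num⟩ = 1}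

/-- The image in `ℝ` of a set `C ⊆ [0,1]` under `f : C([0,1], ℝ)`. -/
def imgC (f : C(Set.Icc (0:ℝ) 1, ℝ)) (C : Set ℝ) : Set ℝ :=
  ⇑f '' (Subtype.val ⁻¹' C)

/-- `H_ε(C)`: the set of `φ ∈ H⁺` such that `φ(C)` has no 3-term AP of step `d ≥ ε`. -/
def Heps (C : Set ℝ) (ε : ℝ) : Set ↥Hplus :=
  {φ | ¬ ∃ x d : ℝ, ε ≤ d ∧ x ∈ imgC φ.1 C ∧ x + d ∈ imgC φ.1 C ∧ x + 2 * d ∈ imgC φ.1 C}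

open Filter Topology

def NoWideAP (ε : ℝ) (A : Set ℝ) : Prop :=
  ¬ ∃ x d : ℝ, ε ≤ d ∧ x ∈ A ∧ x + d ∈ A ∧ x + 2 * d ∈ A

lemma NoWideAP.mono {ε : ℝ} {A B : Set ℝ} (hB : NoWideAP ε B) (hAB : A ⊆ B) : NoWideAP ε A :=
  fun ⟨x, d, hd, h₀, h₁, h₂⟩ => hB ⟨x, d, hd, hAB h₀, hAB h₁, hAB h₂⟩

lemma NoWideAP.of_le {ε ε' : ℝ} {A : Set ℝ} (hA : NoWideAP ε A) (h : ε ≤ ε') : NoWideAP ε' A :=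
  fun ⟨x, d, hd, h₀, h₁, h₂⟩ => hA ⟨x, d, h.trans hd, h₀, h₁, h₂⟩

lemma FAP.of_forall_noWideAP {A : Set ℝ} (h : ∀ ε > 0, NoWideAP ε A) : FAP A :=
  fun ⟨x, d, hd, h₀, h₁, h₂⟩ => h d hd ⟨x, d, le_rfl, h₀, h₁, h₂⟩

lemma fap_pair (a b : ℝ) : FAP {a, b} := by
  rintro ⟨x, d, hd, h₀, h₁, h₂⟩
  simp only [mem_insert_iff, mem_singleton_iff] at h₀ h₁ h₂
  rcases h₀ with rfl | rfl <;> rcases h₁ with h₁ | h₁ <;> rcases h₂ with h₂ | h₂ <;> linarith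

lemma FAP.eq_of_add_eq_two_mul {A : Set ℝ} (hA : FAP A) {a b c : ℝ} (ha : a ∈ A) (hb : b ∈ A)
    (hc : c ∈ A) (h : a + c = 2 * b) : a = b := by
  rcases lt_trichotomy a b with hab | rfl | hab
  · exact (hA ⟨a, b - a, by linarith, ha, by simpa, by convert hc using 1; linarith⟩).elim
  · rfl
  · exact (hA ⟨c, a - b, by linarith, hc, by convert hb using 1; linarith,
      by convert ha using 1; linarith⟩).elim

/-- Only the finitely many values `2b - c` and `(b + c) / 2`, `b, c ∈ A`, can complete a
progression with two points of `A`. -/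
lemma FAP.exists_insert_of_infinite {A U : Set ℝ} (hA : A.Finite) (hfap : FAP A)
    (hU : U.Infinite) : ∃ u ∈ U, FAP (insert u A) := by
  set B := (fun p : ℝ × ℝ => 2 * p.1 - p.2) '' A ×ˢ A ∪ (fun p : ℝ × ℝ => (p.1 + p.2) / 2) '' A ×ˢ A
  have hB : B.Finite := ((hA.prod hA).image _).union ((hA.prod hA).image _)
  obtain ⟨u, huU, huB⟩ := (hU.sdiff hB).nonempty
  refine ⟨u, huU, ?_⟩
  rintro ⟨x, d, hd, h₀, h₁, h₂⟩
  rw [mem_insert_iff] at h₀ h₁ h₂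
  rcases h₀ with rfl | h₀ <;> rcases h₁ with h₁ | h₁ <;> rcases h₂ with h₂ | h₂
  · linarith
  · linarith
  · linarith
  · exact huB (Or.inl ⟨(x + d, x + 2 * d), mk_mem_prod h₁ h₂, by ring⟩)
  · linarith
  · exact huB (Or.inr ⟨(x, x + 2 * d), mk_mem_prod h₀ h₂, by rw [← h₁]; ring⟩)
  · exact huB (Or.inl ⟨(x + d, x), mk_mem_prod h₁ h₀, by rw [← h₂]; ring⟩)
  · exact hfap ⟨x, d, hd, h₀, h₁, h₂⟩

lemma exists_finite_fap_superset_meeting {F : Set ℝ} (hF : F.Finite) (hfap : FAP F)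
    {I : ℕ → Set ℝ} (hI : ∀ j, (I j).Infinite) (n : ℕ) :
    ∃ P : Set ℝ, P.Finite ∧ F ⊆ P ∧ FAP P ∧ ∀ j < n, ∃ p ∈ P, p ∈ I j := by
  induction n with
  | zero => exact ⟨F, hF, subset_rfl, hfap, fun j hj => (Nat.not_lt_zero j hj).elim⟩
  | succ n ih =>
    obtain ⟨P, hP, hFP, hPfap, hmeet⟩ := ih
    obtain ⟨u, huI, hufap⟩ := hPfap.exists_insert_of_infinite hP (hI n)
    refine ⟨insert u P, hP.insert u, hFP.trans (subset_insert u P), hufap, fun j hj => ?_⟩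
    rcases Nat.lt_succ_iff_lt_or_eq.mp hj with hj | rfl
    · obtain ⟨p, hpP, hpI⟩ := hmeet j hj
      exact ⟨p, mem_insert_of_mem u hpP, hpI⟩
    · exact ⟨u, mem_insert u P, huI⟩

/-- A progression near `a, b, c ∈ P` forces `|a + c - 2b| ≤ 4η`, while `a + c = 2b` forces
`a = b`, hence a step `≤ 2η`. -/
lemma FAP.eventually_noWideAP_thickening {P : Set ℝ} (hP : P.Finite) (hfap : FAP P) {ε : ℝ}
    (hε : 0 < ε) : ∀ᶠ η in 𝓝 (0 : ℝ), NoWideAP ε {x | ∃ p ∈ P, |x - p| ≤ η} := by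
  have hgap : ∀ᶠ η in 𝓝 (0 : ℝ), ∀ a ∈ P, ∀ b ∈ P, ∀ c ∈ P,
      a + c ≠ 2 * b → 4 * η < |a + c - 2 * b| := by
    refine hP.eventually_all.2 fun a _ => hP.eventually_all.2 fun b _ => hP.eventually_all.2
      fun c _ => ?_
    by_cases h : a + c = 2 * b
    · exact Eventually.of_forall fun _ h' => (h' h).elim
    · have : 0 < |a + c - 2 * b| / 4 := by
        have : a + c - 2 * b ≠ 0 := sub_ne_zero.mpr h
        positivity
      exact (eventually_lt_nhds this).mono fun η hη _ => by linarith
  filter_upwards [hgap, eventually_lt_nhds (half_pos hε)] with η hgap hη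
  rintro ⟨x, d, hd, ⟨a, ha, hxa⟩, ⟨b, hb, hxb⟩, ⟨c, hc, hxc⟩⟩
  rw [abs_le] at hxa hxb hxc
  by_cases h : a + c = 2 * b
  · have := hfap.eq_of_add_eq_two_mul ha hb hc h
    subst this
    linarith
  · have := hgap a ha b hb c hc h
    rcases lt_abs.mp this with h' | h' <;> linarith

lemma Monotone.exists_mem_Icc_of_mem_Icc {x : ℕ → ℝ} (hx : Monotone x) {M : ℕ} (hM : 0 < M)
    {t : ℝ} (ht : t ∈ Icc (x 0) (x M)) : ∃ i < M, t ∈ Icc (x i) (x (i + 1)) := by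
  rcases eq_or_lt_of_le ht.1 with rfl | h
  · exact ⟨0, hM, le_rfl, hx zero_le_one⟩
  · obtain ⟨i, hti, hi, hti'⟩ : ∃ i, x i < t ∧ i < M ∧ t ≤ x (i + 1) := by
      simpa using Ioc_subset_biUnion_Ioc M x ⟨h, ht.2⟩
    exact ⟨i, hi, hti.le, hti'⟩

def pwLinear (x y : ℕ → ℝ) (M : ℕ) (t : ℝ) : ℝ :=
  y 0 + ∑ i ∈ Finset.range M,
    (y (i + 1) - y i) / (x (i + 1) - x i) * max 0 (min t (x (i + 1)) - x i)

section pwLinear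

variable {x y : ℕ → ℝ} {M : ℕ}

lemma continuous_pwLinear (x y : ℕ → ℝ) (M : ℕ) : Continuous (pwLinear x y M) := by
  unfold pwLinear
  fun_prop

lemma pwLinear_knot (hx : ∀ i < M, x i < x (i + 1)) {j : ℕ} (hj : j ≤ M) :
    pwLinear x y M (x j) = y j := by
  have hmono : MonotoneOn x (Iic M) :=
    (strictMonoOn_Iic_of_lt_succ fun i hi => by simpa using hx i hi).monotoneOn
  have hlate : ∀ i ∈ Finset.range M, i ∉ Finset.range j →
      (y (i + 1) - y i) / (x (i + 1) - x i) * max 0 (min (x j) (x (i + 1)) - x i) = 0 := by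
    intro i hi hij
    simp only [Finset.mem_range, not_lt] at hi hij
    have : x j ≤ x i := hmono (mem_Iic.2 hj) (mem_Iic.2 hi.le) hij
    rw [max_eq_left (by linarith [min_le_left (x j) (x (i + 1))]), mul_zero]
  have hearly : ∀ i ∈ Finset.range j,
      (y (i + 1) - y i) / (x (i + 1) - x i) * max 0 (min (x j) (x (i + 1)) - x i)
        = y (i + 1) - y i := by
    intro i hi
    rw [Finset.mem_range] at hi
    have hxi := hx i (by omega)
    rw [min_eq_right (hmono (mem_Iic.2 (by omega)) (mem_Iic.2 hj) hi),
      max_eq_right (by linarith), div_mul_cancel₀ _ (by linarith)]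
  rw [pwLinear, ← Finset.sum_subset (Finset.range_subset_range.2 hj) hlate,
    Finset.sum_congr rfl hearly, Finset.sum_range_sub]
  ring

lemma pwLinear_term_mono (hx : ∀ i < M, x i < x (i + 1)) (hy : ∀ i < M, y i ≤ y (i + 1))
    {i : ℕ} (hi : i < M) : Monotone fun t =>
      (y (i + 1) - y i) / (x (i + 1) - x i) * max 0 (min t (x (i + 1)) - x i) := by
  intro s t hst
  exact mul_le_mul_of_nonneg_left (max_le_max le_rfl (sub_le_sub_right (min_le_min_right _ hst) _))
    (div_nonneg (by linarith [hy i hi]) (by linarith [hx i hi]))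

lemma monotone_pwLinear (hx : ∀ i < M, x i < x (i + 1)) (hy : ∀ i < M, y i ≤ y (i + 1)) :
    Monotone (pwLinear x y M) := fun s t hst => by
  apply add_le_add_right
  exact Finset.sum_le_sum fun i hi => pwLinear_term_mono hx hy (Finset.mem_range.1 hi) hst

lemma strictMonoOn_pwLinear (hx : ∀ i < M, x i < x (i + 1)) (hy : ∀ i < M, y i < y (i + 1)) :
    StrictMonoOn (pwLinear x y M) (Icc (x 0) (x M)) := by
  intro s hs t ht hst
  obtain ⟨i, hsi, hi, hsi'⟩ : ∃ i, x i ≤ s ∧ i < M ∧ s < x (i + 1) := by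
    simpa using Ico_subset_biUnion_Ico M x ⟨hs.1, hst.trans_le ht.2⟩
  have hy' : ∀ i < M, y i ≤ y (i + 1) := fun i hi => (hy i hi).le
  apply add_lt_add_right
  refine Finset.sum_lt_sum (fun k hk => pwLinear_term_mono hx hy' (Finset.mem_range.1 hk) hst.le)
    ⟨i, Finset.mem_range.2 hi, ?_⟩
  have hslope : 0 < (y (i + 1) - y i) / (x (i + 1) - x i) :=
    div_pos (by linarith [hy i hi]) (by linarith [hx i hi])
  refine mul_lt_mul_of_pos_left ?_ hslope
  rw [min_eq_left hsi'.le, max_eq_right (by linarith)]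
  exact (sub_lt_sub_right (lt_min hst hsi') _).trans_le (le_max_right _ _)

end pwLinear

def interleave3 (a b c : ℕ → ℝ) (i : ℕ) : ℝ :=
  if i % 3 = 0 then a (i / 3) else if i % 3 = 1 then b (i / 3) else c (i / 3)

section interleave3

variable {a b c : ℕ → ℝ}

@[simp] lemma interleave3_three_mul (j : ℕ) : interleave3 a b c (3 * j) = a j := by
  simp [interleave3]

@[simp] lemma interleave3_three_mul_add_one (j : ℕ) : interleave3 a b c (3 * j + 1) = b j := by
  simp [interleave3, Nat.add_mod, show (3 * j + 1) / 3 = j by omega]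

@[simp] lemma interleave3_three_mul_add_two (j : ℕ) : interleave3 a b c (3 * j + 2) = c j := by
  simp [interleave3, Nat.add_mod, show (3 * j + 2) / 3 = j by omega]

lemma interleave3_lt_succ {n : ℕ} (h : ∀ j < n, a j < b j ∧ b j < c j ∧ c j < a (j + 1)) :
    ∀ i < 3 * n, interleave3 a b c i < interleave3 a b c (i + 1) := by
  intro i hi
  obtain ⟨j, rfl | rfl | rfl⟩ : ∃ j, i = 3 * j ∨ i = 3 * j + 1 ∨ i = 3 * j + 2 :=
    ⟨i / 3, by omega⟩
  · simpa using (h j (by omega)).1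
  · simpa using (h j (by omega)).2.1
  · simpa [show 3 * j + 2 + 1 = 3 * (j + 1) by ring] using (h j (by omega)).2.2

end interleave3

lemma exists_knot_map {N : ℕ} {s u v : ℕ → ℝ} {γ : ℝ} (hγ : 0 < γ)
    (hs : ∀ j < N, s j + γ < s (j + 1) - γ)
    (huv : ∀ j < N, s j < u j ∧ u j < v j ∧ v j < s (j + 1)) :
    ∃ g : C(ℝ, ℝ), Monotone g ∧ StrictMonoOn g (Icc (s 0) (s N)) ∧ (∀ j ≤ N, g (s j) = s j) ∧
      ∀ j < N, g (s j + γ) = u j ∧ g (s (j + 1) - γ) = v j := by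
  set x := interleave3 s (fun j => s j + γ) (fun j => s (j + 1) - γ)
  set y := interleave3 s u v
  have hx : ∀ i < 3 * N, x i < x (i + 1) :=
    interleave3_lt_succ fun j hj => ⟨by linarith, hs j hj, by linarith⟩
  have hy : ∀ i < 3 * N, y i < y (i + 1) := interleave3_lt_succ huv
  have hx0 : x 0 = s 0 := by simp [x, interleave3]
  have hxN : x (3 * N) = s N := interleave3_three_mul N
  refine ⟨⟨pwLinear x y (3 * N), continuous_pwLinear x y _⟩,
    monotone_pwLinear hx fun i hi => (hy i hi).le, ?_, fun j hj => ?_, fun j hj => ⟨?_, ?_⟩⟩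
  · simpa [hx0, hxN] using strictMonoOn_pwLinear hx hy
  · simpa [x, y] using pwLinear_knot (y := y) hx (show 3 * j ≤ 3 * N by omega)
  · simpa [x, y] using pwLinear_knot (y := y) hx (show 3 * j + 1 ≤ 3 * N by omega)
  · simpa [x, y] using pwLinear_knot (y := y) hx (show 3 * j + 2 ≤ 3 * N by omega)

lemma exists_partition_avoiding {D : Set ℝ}
    (hD : ∀ a b, 0 ≤ a → a < b → b ≤ 1 → ∃ t ∈ Ioo a b, t ∉ D) {N : ℕ} (hN : 0 < N) :
    ∃ s : ℕ → ℝ, StrictMono s ∧ s 0 = 0 ∧ s N = 1 ∧ (∀ j, s (j + 1) - s j < 2 / N) ∧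
      ∀ j, 0 < j → j < N → s j ∉ D := by
  have hNpos : (0 : ℝ) < N := by exact_mod_cast hN
  -- off the cuts take `s j = j / N`, so that `s` is strictly increasing on all of `ℕ`
  have hpick : ∀ j : ℕ, ∃ t ∈ Ico ((j : ℝ) / N) ((j + 1) / N),
      (j = 0 ∨ N ≤ j → t = j / N) ∧ (0 < j → j < N → t ∉ D) := by
    intro j
    have hlt : (j : ℝ) / N < (j + 1) / N := by gcongr; linarith
    by_cases hj : 0 < j ∧ j < N
    · have hj1 : (j + 1 : ℝ) / N ≤ 1 := by
        rw [div_le_one hNpos]; exact_mod_cast hj.2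
      obtain ⟨t, ht, htD⟩ := hD _ _ (by positivity) hlt hj1
      exact ⟨t, ⟨ht.1.le, ht.2⟩, fun h => by omega, fun _ _ => htD⟩
    · exact ⟨j / N, ⟨le_rfl, hlt⟩, fun _ => rfl, fun h₀ h₁ => (hj ⟨h₀, h₁⟩).elim⟩
  choose s hs_mem hs_grid hs_notMem using hpick
  refine ⟨s, strictMono_nat_of_lt_succ fun j => ?_, by simpa using hs_grid 0 (Or.inl rfl),
    by simpa [hNpos.ne'] using hs_grid N (Or.inr le_rfl), fun j => ?_, hs_notMem⟩
  · calc s j < (j + 1) / N := (hs_mem j).2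
      _ ≤ s (j + 1) := by simpa using (hs_mem (j + 1)).1
  · have h₁ := (hs_mem (j + 1)).2
    have h₀ := (hs_mem j).1
    push_cast at h₁
    calc s (j + 1) - s j < (j + 1 + 1) / N - j / N := by linarith
      _ = 2 / N := by ring

lemma IsClosed.eventually_lt_abs_sub {D : Set ℝ} (hD : IsClosed D) {a : ℝ} (ha : a ∉ D) :
    ∀ᶠ γ in 𝓝 (0 : ℝ), ∀ t ∈ D, γ < |t - a| := by
  obtain ⟨r, hr, hball⟩ := Metric.mem_nhds_iff.1 (hD.isOpen_compl.mem_nhds ha)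
  filter_upwards [eventually_lt_nhds hr] with γ hγ t ht
  by_contra! h
  exact hball (by rw [Metric.mem_ball, Real.dist_eq]; linarith) ht

lemma Monotone.exists_window {s : ℕ → ℝ} (hs : Monotone s) {N : ℕ} (hN : 0 < N) {g : ℝ → ℝ}
    (hg : Monotone g) (hgs : ∀ j ≤ N, g (s j) = s j) {t : ℝ} (ht : t ∈ Icc (s 0) (s N)) :
    ∃ j < N, t ∈ Icc (s j) (s (j + 1)) ∧ g t ∈ Icc (s j) (s (j + 1)) := by
  obtain ⟨j, hj, htj⟩ := hs.exists_mem_Icc_of_mem_Icc hN ht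
  exact ⟨j, hj, htj, hgs j hj.le ▸ hg htj.1, hgs (j + 1) hj ▸ hg htj.2⟩

lemma eventually_margin {D : Set ℝ} (hD : IsClosed D) {s : ℕ → ℝ} (hs : StrictMono s) {N : ℕ}
    (hsD : ∀ j, 0 < j → j < N → s j ∉ D) :
    ∀ᶠ γ in 𝓝 (0 : ℝ), ∀ j < N, (0 < j → ∀ t ∈ D, γ < |t - s j|) ∧ s j + γ < s (j + 1) - γ := by
  refine (finite_Iio N).eventually_all.2 fun j (hj : j < N) => Eventually.and ?_ ?_
  · rcases Nat.eq_zero_or_pos j with rfl | hj₀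
    · exact Eventually.of_forall fun _ h => (lt_irrefl 0 h).elim
    · exact (hD.eventually_lt_abs_sub (hsD j hj₀ hj)).mono fun γ hγ _ => hγ
  · exact (eventually_lt_nhds (half_pos (sub_pos.2 (hs j.lt_succ_self)))).mono
      fun γ hγ => by linarith

/-- The `j`-th window `[s j, s (j+1)]` will be squeezed into `[c, c + η/4]` for `c` this value,
which lies within `η/2` of `0`, `1`, `p j` for the first, last and middle windows. -/
def squeezeTarget (N : ℕ) (p : ℕ → ℝ) (η : ℝ) (j : ℕ) : ℝ :=
  if j = 0 then η / 4 else if j = N - 1 then 1 - η / 2 else p j - η / 4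

lemma eventually_squeezeTarget_mem {N : ℕ} {s p : ℕ → ℝ} (hs : StrictMono s) (hs0 : s 0 = 0)
    (hsN : s N = 1) (hp : ∀ j < N, p j ∈ Ioo (s j) (s (j + 1))) :
    ∀ᶠ η in 𝓝[>] (0 : ℝ), ∀ j < N,
      s j < squeezeTarget N p η j ∧ squeezeTarget N p η j + η / 4 < s (j + 1) := by
  refine (finite_Iio N).eventually_all.2 fun j (hj : j < N) => ?_
  have hr : 0 < min (s 1) (min (1 - s (N - 1)) (p j - s j)) := by
    have h₁ := hs (show 0 < 1 by omega)
    have h₂ := hs (show N - 1 < N by omega)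
    have h₃ := (hp j hj).1
    simp only [lt_min_iff]
    exact ⟨by linarith, by linarith, by linarith⟩
  filter_upwards [self_mem_nhdsWithin, nhdsWithin_le_nhds (eventually_lt_nhds hr)]
    with η (hη₀ : 0 < η) hηr
  simp only [lt_min_iff] at hηr
  have hpj := hp j hj
  simp only [squeezeTarget]
  split_ifs with h₀ h₁
  · subst h₀; constructor <;> linarith
  · subst h₁; rw [Nat.sub_add_cancel (by omega)]; constructor <;> linarith
  · constructor <;> linarith [hpj.2]

lemma exists_squeeze {D : Set ℝ} (hDcl : IsClosed D) (hD01 : D ⊆ Icc 0 1) {N : ℕ} (hN : 2 ≤ N)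
    {s : ℕ → ℝ} (hs : StrictMono s) (hs0 : s 0 = 0) (hsN : s N = 1)
    (hsD : ∀ j, 0 < j → j < N → s j ∉ D) {P : Set ℝ} (h0 : 0 ∈ P) (h1 : 1 ∈ P) {p : ℕ → ℝ}
    (hpP : ∀ j < N, p j ∈ P) {η : ℝ}
    (hη : ∀ j < N, s j < squeezeTarget N p η j ∧ squeezeTarget N p η j + η / 4 < s (j + 1)) :
    ∃ g : C(ℝ, ℝ), Monotone g ∧ StrictMonoOn g (Icc 0 1) ∧ (∀ j ≤ N, g (s j) = s j) ∧
      ∀ t ∈ D, ∃ q ∈ P, |g t - q| ≤ η := by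
  have hη₀ : 0 < η := by simpa [squeezeTarget, hs0] using (hη 0 (by omega)).1
  obtain ⟨γ, hγ, hγ₀ : 0 < γ⟩ := (((eventually_margin hDcl hs hsD).filter_mono
    nhdsWithin_le_nhds).and (eventually_mem_nhdsWithin (s := Ioi 0))).exists
  obtain ⟨g, hg_mono, hg_smono, hg_s, hg_uv⟩ := exists_knot_map hγ₀ (fun j hj => (hγ j hj).2)
    (u := squeezeTarget N p η) (v := fun j => squeezeTarget N p η j + η / 4)
    (fun j hj => ⟨(hη j hj).1, by linarith, (hη j hj).2⟩)
  refine ⟨g, hg_mono, by simpa [hs0, hsN] using hg_smono, hg_s, fun t ht => ?_⟩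
  obtain ⟨j, hj, htj, hgtj⟩ := hs.monotone.exists_window (by omega) hg_mono hg_s
    (by simpa [hs0, hsN] using hD01 ht)
  have hlow : 0 < j → squeezeTarget N p η j ≤ g t := fun hj₀ => by
    have := (hγ j hj).1 hj₀ t ht
    rw [abs_of_nonneg (by linarith [htj.1])] at this
    exact (hg_uv j hj).1 ▸ hg_mono (by linarith)
  have hhigh : j + 1 < N → g t ≤ squeezeTarget N p η j + η / 4 := fun hj₁ => by
    have := (hγ (j + 1) hj₁).1 (by omega) t ht
    rw [abs_of_nonpos (by linarith [htj.2])] at this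
    exact (hg_uv j hj).2 ▸ hg_mono (by linarith)
  rcases Nat.eq_zero_or_pos j with rfl | hj₀
  · have := hhigh (by omega)
    simp only [squeezeTarget, ↓reduceIte] at this
    exact ⟨0, h0, abs_le.2 ⟨by linarith [hgtj.1], by linarith⟩⟩
  by_cases hjN : j = N - 1
  · have := hlow hj₀
    simp only [squeezeTarget, if_neg hj₀.ne', if_pos hjN] at this
    have := hgtj.2
    rw [hjN, Nat.sub_add_cancel (by omega), hsN] at this
    exact ⟨1, h1, abs_le.2 ⟨by linarith, by linarith⟩⟩
  · have h₁ := hlow hj₀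
    have h₂ := hhigh (by omega)
    simp only [squeezeTarget, if_neg hj₀.ne', if_neg hjN] at h₁ h₂
    exact ⟨p j, hpP j hj, abs_le.2 ⟨by linarith, by linarith⟩⟩

theorem exists_near_id_noWideAP_image {D : Set ℝ} (hDcl : IsClosed D) (hD01 : D ⊆ Icc 0 1)
    (hD : ∀ a b, 0 ≤ a → a < b → b ≤ 1 → ∃ t ∈ Ioo a b, t ∉ D) {ε δ : ℝ} (hε : 0 < ε)
    (hδ : 0 < δ) :
    ∃ g : C(ℝ, ℝ), StrictMonoOn g (Icc 0 1) ∧ g 0 = 0 ∧ g 1 = 1 ∧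
      (∀ t ∈ Icc 0 1, |g t - t| < δ) ∧ NoWideAP ε (g '' D) := by
  obtain ⟨N, hNδ, hN⟩ : ∃ N : ℕ, 2 / δ < N ∧ 2 ≤ N := by
    obtain ⟨N, hN⟩ := exists_nat_gt (max (2 / δ) 2)
    exact ⟨N, (le_max_left _ _).trans_lt hN, by exact_mod_cast ((le_max_right _ _).trans_lt hN).le⟩
  have hmesh_δ : 2 / (N : ℝ) < δ := by
    rw [div_lt_iff₀ (by positivity)]; rw [div_lt_iff₀ hδ] at hNδ; linarith
  obtain ⟨s, hs, hs0, hsN, hmesh, hsD⟩ := exists_partition_avoiding hD (N := N) (by omega)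
  obtain ⟨P, hPfin, h01, hPfap, hmeet⟩ := exists_finite_fap_superset_meeting (toFinite {0, 1})
    (fap_pair 0 1) (I := fun j => Ioo (s j) (s (j + 1)))
    (fun j => Ioo_infinite (hs (Nat.lt_succ_self j))) N
  choose! p hpP hpI using hmeet
  obtain ⟨η, hηP, hηs⟩ := (((hPfap.eventually_noWideAP_thickening hPfin hε).filter_mono
    nhdsWithin_le_nhds).and (eventually_squeezeTarget_mem hs hs0 hsN hpI)).exists
  obtain ⟨g, hg_mono, hg_smono, hg_s, hg_D⟩ := exists_squeeze hDcl hD01 hN hs hs0 hsN hsD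
    (h01 (by simp)) (h01 (by simp)) hpP hηs
  refine ⟨g, hg_smono, by simpa [hs0] using hg_s 0 (by omega), by simpa [hsN] using hg_s N le_rfl,
    fun t ht => ?_, hηP.mono ?_⟩
  · obtain ⟨j, -, htj, hgtj⟩ := hs.monotone.exists_window (by omega) hg_mono hg_s
      (by rwa [hs0, hsN])
    have := hmesh j
    rw [abs_lt]; constructor <;> linarith [htj.1, htj.2, hgtj.1, hgtj.2]
  · rintro _ ⟨t, ht, rfl⟩
    exact hg_D t ht

lemma isOpen_setOf_noWideAP_image {X : Type*} [TopologicalSpace X] [CompactSpace X] {K : Set X}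
    (hK : IsClosed K) (ε : ℝ) : IsOpen {f : C(X, ℝ) | NoWideAP ε (f '' K)} := by
  set S : Set (C(X, ℝ) × X × X × X) := {q | q.2.1 ∈ K ∧ q.2.2.1 ∈ K ∧ q.2.2.2 ∈ K ∧
      ε ≤ q.1 q.2.2.1 - q.1 q.2.1 ∧ q.1 q.2.1 + q.1 q.2.2.2 = 2 * q.1 q.2.2.1}
  have hS : IsClosed S := by
    have h₁ : Continuous fun q : C(X, ℝ) × X × X × X => q.1 q.2.1 := by fun_prop
    have h₂ : Continuous fun q : C(X, ℝ) × X × X × X => q.1 q.2.2.1 := by fun_prop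
    have h₃ : Continuous fun q : C(X, ℝ) × X × X × X => q.1 q.2.2.2 := by fun_prop
    exact (hK.preimage (by fun_prop)).inter <| (hK.preimage (by fun_prop)).inter <|
      (hK.preimage (by fun_prop)).inter <| (isClosed_le continuous_const (h₂.sub h₁)).inter
        (isClosed_eq (h₁.add h₃) (continuous_const.mul h₂))
  have hcompl : {f : C(X, ℝ) | NoWideAP ε (f '' K)}ᶜ = Prod.fst '' S := by
    ext f
    simp only [mem_compl_iff, mem_ofPred_eq, NoWideAP, not_not, mem_image]
    constructor
    · rintro ⟨x, d, hd, ⟨a, ha, rfl⟩, ⟨b, hb, hbx⟩, ⟨c, hc, hcx⟩⟩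
      exact ⟨(f, a, b, c), ⟨ha, hb, hc, by linarith, by linarith⟩, rfl⟩
    · rintro ⟨⟨f, a, b, c⟩, ⟨ha, hb, hc, hd, hsum⟩, rfl⟩
      exact ⟨f a, f b - f a, hd, ⟨a, ha, rfl⟩, ⟨b, hb, by ring⟩, ⟨c, hc, by linarith⟩⟩
  rw [← isClosed_compl_iff, hcompl]
  exact isClosedMap_fst_of_compactSpace S hS

section Hplus

variable {φ : C(Icc (0 : ℝ) 1, ℝ)}

lemma mem_Icc_of_mem_Hplus (hφ : φ ∈ Hplus) (c : Icc (0 : ℝ) 1) : φ c ∈ Icc (0 : ℝ) 1 := by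
  obtain ⟨hmono, h0, h1⟩ := hφ
  exact ⟨h0.symm.trans_le (hmono.monotone (show (⟨0, by norm_num⟩ : Icc (0 : ℝ) 1) ≤ c from c.2.1)),
    (hmono.monotone (show c ≤ ⟨1, by norm_num⟩ from c.2.2)).trans_eq h1⟩

lemma exists_apply_eq_of_mem_Hplus (hφ : φ ∈ Hplus) {y : ℝ} (hy : y ∈ Icc (0 : ℝ) 1) :
    ∃ c, φ c = y := by
  obtain ⟨-, h0, h1⟩ := hφ
  have := intermediate_value_univ (⟨0, by norm_num⟩ : Icc (0 : ℝ) 1) ⟨1, by norm_num⟩ φ.continuous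
  rw [h0, h1] at this
  exact this hy

lemma imgC_subset_Icc (hφ : φ ∈ Hplus) (C : Set ℝ) : imgC φ C ⊆ Icc 0 1 := by
  rintro _ ⟨c, -, rfl⟩
  exact mem_Icc_of_mem_Hplus hφ c

lemma isClosed_imgC {C : Set ℝ} (hC : IsClosed C) : IsClosed (imgC φ C) :=
  ((hC.preimage continuous_subtype_val).isCompact.image φ.continuous).isClosed

lemma exists_mem_Ioo_notMem_imgC (hφ : φ ∈ Hplus) {C : Set ℝ} (hC : interior C = ∅) {a b : ℝ}
    (ha : 0 ≤ a) (hab : a < b) (hb : b ≤ 1) : ∃ t ∈ Ioo a b, t ∉ imgC φ C := by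
  obtain ⟨c₁, rfl⟩ := exists_apply_eq_of_mem_Hplus hφ ⟨ha, hab.le.trans hb⟩
  obtain ⟨c₂, rfl⟩ := exists_apply_eq_of_mem_Hplus hφ ⟨ha.trans hab.le, hb⟩
  obtain ⟨t, htC, ht⟩ :=
    (interior_eq_empty_iff_dense_compl.1 hC).exists_between (hφ.1.lt_iff_lt.1 hab)
  let c : Icc (0 : ℝ) 1 := ⟨t, c₁.2.1.trans ht.1.le, ht.2.le.trans c₂.2.2⟩
  refine ⟨φ c, ⟨hφ.1 (show c₁ < c from ht.1), hφ.1 (show c < c₂ from ht.2)⟩, ?_⟩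
  rintro ⟨c', hc', hcc'⟩
  rw [hφ.1.injective hcc'] at hc'
  exact htC hc'

lemma comp_mem_Hplus (hφ : φ ∈ Hplus) {g : C(ℝ, ℝ)} (hg : StrictMonoOn g (Icc 0 1))
    (hg0 : g 0 = 0) (hg1 : g 1 = 1) : g.comp φ ∈ Hplus :=
  ⟨fun a b hab => hg (mem_Icc_of_mem_Hplus hφ a) (mem_Icc_of_mem_Hplus hφ b) (hφ.1 hab),
    by rw [ContinuousMap.comp_apply, hφ.2.1, hg0], by rw [ContinuousMap.comp_apply, hφ.2.2, hg1]⟩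

end Hplus

lemma isOpen_Heps {C : Set ℝ} (hC : IsClosed C) (ε : ℝ) : IsOpen (Heps C ε) :=
  (isOpen_setOf_noWideAP_image (hC.preimage continuous_subtype_val) ε).preimage
    continuous_subtype_val

lemma dense_Heps {C : Set ℝ} (hC : IsClosed C) (hnd : IsNowhereDense C) {ε : ℝ} (hε : 0 < ε) :
    Dense (Heps C ε) := by
  refine Metric.dense_iff.2 fun φ δ hδ => ?_
  obtain ⟨g, hg, hg0, hg1, hgδ, hgAP⟩ := exists_near_id_noWideAP_image (isClosed_imgC hC)
    (imgC_subset_Icc φ.2 C)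
    (fun _ _ => exists_mem_Ioo_notMem_imgC φ.2 (hC.isNowhereDense_iff.1 hnd)) hε hδ
  refine ⟨⟨g.comp φ.1, comp_mem_Hplus φ.2 hg hg0 hg1⟩, ?_, ?_⟩
  · rw [Metric.mem_ball, Subtype.dist_eq, ContinuousMap.dist_lt_iff hδ]
    exact fun c => hgδ _ (mem_Icc_of_mem_Hplus φ.2 c)
  · show NoWideAP ε (imgC (g.comp φ.1) C)
    rwa [imgC, ContinuousMap.coe_comp, image_comp]

theorem H0_residual_and_FAP_general (C : Set ℝ)
    (hcomp : IsCompact C) (hnd : IsNowhereDense C) :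
    IsMeagre (⋂ (k : ℕ) (_ : 1 ≤ k), Heps C (1 / (k : ℝ)))ᶜ ∧
    ∀ φ ∈ ⋂ (k : ℕ) (_ : 1 ≤ k), Heps C (1 / (k : ℝ)), FAP (imgC φ.1 C) := by
  refine ⟨?_, fun φ hφ => FAP.of_forall_noWideAP fun ε hε => ?_⟩
  · rw [IsMeagre, compl_compl]
    exact countable_iInter_mem.2 fun k => countable_iInter_mem.2 fun hk =>
      residual_of_dense_open (isOpen_Heps hcomp.isClosed _)
        (dense_Heps hcomp.isClosed hnd (one_div_pos.2 (Nat.cast_pos.2 hk)))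
  · obtain ⟨k, hk⟩ := exists_nat_one_div_lt hε
    have : NoWideAP (1 / ((k + 1 : ℕ) : ℝ)) (imgC φ.1 C) := mem_iInter₂.1 hφ (k + 1) (by omega)
    exact this.of_le (by exact_mod_cast hk.le)

/-- For compact nowhere dense `C ⊆ [0,1]`, the set `H_0(C) = ⋂_{k ≥ 1} H_{1/k}(C)` is
residual in `H⁺`, and every `φ ∈ H_0(C)` maps `C` onto an AP-free set. -/
theorem H0_residual_and_FAP (C : Set ℝ) (hC : C ⊆ Set.Icc 0 1)
    (hcomp : IsCompact C) (hnd : IsNowhereDense C) :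
    IsMeagre (⋂ (k : ℕ) (_ : 1 ≤ k), Heps C (1 / (k : ℝ)))ᶜ ∧
    ∀ φ ∈ ⋂ (k : ℕ) (_ : 1 ≤ k), Heps C (1 / (k : ℝ)), FAP (imgC φ.1 C) :=
  H0_residual_and_FAP_general C hcomp hnd
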